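/- arXiv:1702.04567 — 7 statements merged into one kernel-verified Lean document; each statement's English description precedes it below -/
import Mathlib

section
/- Let (X,d) be a metric space with binary relation R and p a w-distance with respect to R. Suppose (xₙ) is an R-preserving sequence and (uₙ) is a sequence of positive reals converging to 0 such that p(xₙ, xₘ) ≤ uₙ for all m > n. Then (xₙ) is a Cauchy sequence in (X,d). -/
theorem wdist_cauchy_of_bound {X : Type*} [MetricSpace X] (R : X → X → Prop)
    (p : X → X → ℝ) (hp0 : ∀ x y, 0 ≤ p x y)
    (hw1 : ∀ x y z, p x z ≤ p x y + p y z)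
    (hw2 : ∀ (x : X) (u : ℕ → X) (l : X), (∀ n, R (u n) (u (n + 1))) →
      Filter.Tendsto u Filter.atTop (nhds l) →
      p x l ≤ Filter.liminf (fun n => p x (u n)) Filter.atTop)
    (hw3 : ∀ ε > (0:ℝ), ∃ δ > (0:ℝ), ∀ x y z : X, p z x ≤ δ → p z y ≤ δ → dist x y ≤ ε)
    (x : ℕ → X) (hx : ∀ n, R (x n) (x (n + 1)))
    (u : ℕ → ℝ) (hu0 : ∀ n, 0 < u n)
    (hu : Filter.Tendsto u Filter.atTop (nhds 0))
    (hb : ∀ m n : ℕ, n < m → p (x n) (x m) ≤ u n) :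
    CauchySeq x := by
  rw [Metric.cauchySeq_iff]
  intro ε hε
  obtain ⟨δ, hδ, hδ'⟩ := hw3 (ε / 2) (by linarith)
  obtain ⟨N, hN⟩ := (Metric.tendsto_atTop.mp hu δ hδ).imp (fun N h n hn => h n hn)
  refine ⟨N + 1, fun m hm n hn => ?_⟩
  have hd : u N ≤ δ := by
    have := hN N le_rfl
    rw [Real.dist_eq, sub_zero, abs_of_pos (hu0 N)] at this
    linarith
  have h1 : p (x N) (x m) ≤ δ := le_trans (hb m N hm) hd
  have h2 : p (x N) (x n) ≤ δ := le_trans (hb n N hn) hd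
  have := hδ' (x m) (x n) (x N) h1 h2
  linarith
end

section
/- Let (X,d) be a metric space with binary relation R and p a w-distance with respect to R. Suppose (xₙ) and (yₙ) are R-preserving sequences, z ∈ X, and (uₙ), (vₙ) are sequences of positive reals converging to 0 with p(xₙ, yₙ) ≤ uₙ and p(xₙ, z) ≤ vₙ for all n. Then yₙ → z in (X,d). -/
theorem wdist_tendsto_of_bounds {X : Type*} [MetricSpace X] (R : X → X → Prop)
    (p : X → X → ℝ) (hp0 : ∀ x y, 0 ≤ p x y)
    (hw1 : ∀ x y z, p x z ≤ p x y + p y z)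
    (hw2 : ∀ (x : X) (u : ℕ → X) (l : X), (∀ n, R (u n) (u (n + 1))) →
      Filter.Tendsto u Filter.atTop (nhds l) →
      p x l ≤ Filter.liminf (fun n => p x (u n)) Filter.atTop)
    (hw3 : ∀ ε > (0:ℝ), ∃ δ > (0:ℝ), ∀ x y z : X, p z x ≤ δ → p z y ≤ δ → dist x y ≤ ε)
    (x y : ℕ → X) (hx : ∀ n, R (x n) (x (n + 1))) (hy : ∀ n, R (y n) (y (n + 1)))
    (z : X) (u v : ℕ → ℝ) (hu0 : ∀ n, 0 < u n) (hv0 : ∀ n, 0 < v n)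
    (hu : Filter.Tendsto u Filter.atTop (nhds 0))
    (hv : Filter.Tendsto v Filter.atTop (nhds 0))
    (hxy : ∀ n, p (x n) (y n) ≤ u n) (hxz : ∀ n, p (x n) z ≤ v n) :
    Filter.Tendsto y Filter.atTop (nhds z) := by
  rw [Metric.tendsto_atTop]
  intro ε hε
  obtain ⟨δ, hδ, h⟩ := hw3 (ε / 2) (by linarith)
  obtain ⟨N1, hN1⟩ := (Metric.tendsto_atTop.mp hu) δ hδ
  obtain ⟨N2, hN2⟩ := (Metric.tendsto_atTop.mp hv) δ hδ
  refine ⟨max N1 N2, fun n hn => ?_⟩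
  have h1 : u n ≤ δ := by
    have := hN1 n (le_trans (le_max_left _ _) hn)
    rw [Real.dist_eq, sub_zero, abs_of_pos (hu0 n)] at this
    linarith
  have h2 : v n ≤ δ := by
    have := hN2 n (le_trans (le_max_right _ _) hn)
    rw [Real.dist_eq, sub_zero, abs_of_pos (hv0 n)] at this
    linarith
  have := h (y n) z (x n) (le_trans (hxy n) h1) (le_trans (hxz n) h2)
  linarith
end

section
/- Let (X,d) be a complete metric space, R a binary relation on X, p a w-distance on X with respect to R, and T : X → X a map such that: (i) there exists x₀ ∈ X with (x₀, T x₀) ∈ R; (ii) R is T-closed; (iii) T is R-continuous; (iv) there is λ ∈ [0,1) with p(Tx, Ty) ≤ λ p(x,y) whenever (x,y) ∈ R. Then T has a fixed point. -/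
theorem relational_banach_wdist_continuous {X : Type*} [MetricSpace X] [CompleteSpace X]
    (R : X → X → Prop)
    (p : X → X → ℝ) (hp0 : ∀ x y, 0 ≤ p x y)
    (hw1 : ∀ x y z, p x z ≤ p x y + p y z)
    (hw2 : ∀ (x : X) (u : ℕ → X) (l : X), (∀ n, R (u n) (u (n + 1))) →
      Filter.Tendsto u Filter.atTop (nhds l) →
      p x l ≤ Filter.liminf (fun n => p x (u n)) Filter.atTop)
    (hw3 : ∀ ε > (0:ℝ), ∃ δ > (0:ℝ), ∀ x y z : X, p z x ≤ δ → p z y ≤ δ → dist x y ≤ ε)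
    (T : X → X) (x₀ : X) (hx₀ : R x₀ (T x₀))
    (hTc : ∀ x y, R x y → R (T x) (T y))
    (hcont : ∀ (x : X) (u : ℕ → X), (∀ n, R (u n) (u (n + 1))) →
      Filter.Tendsto u Filter.atTop (nhds x) →
      Filter.Tendsto (fun n => T (u n)) Filter.atTop (nhds (T x)))
    (lam : ℝ) (hlam0 : 0 ≤ lam) (hlam1 : lam < 1)
    (hcontr : ∀ x y, R x y → p (T x) (T y) ≤ lam * p x y) :
    ∃ x : X, T x = x := by
  set u : ℕ → X := fun n => T^[n] x₀ with hu
  have hunext : ∀ n, u (n + 1) = T (u n) := by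
    intro n; simp [hu, Function.iterate_succ_apply']
  have hR : ∀ n, R (u n) (u (n + 1)) := by
    intro n; induction n with
    | zero => simpa [hu] using hx₀
    | succ k ih => rw [hunext k, hunext (k+1)]; exact hTc _ _ ih
  set C : ℝ := p (u 0) (u 1) with hC
  have hstep : ∀ n, p (u n) (u (n + 1)) ≤ lam ^ n * C := by
    intro n; induction n with
    | zero => simp [hC]
    | succ k ih =>
      rw [hunext k, hunext (k+1)]
      calc p (T (u k)) (T (u (k+1))) ≤ lam * p (u k) (u (k+1)) := hcontr _ _ (hR k)
        _ ≤ lam * (lam ^ k * C) := by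
            exact mul_le_mul_of_nonneg_left ih hlam0
        _ = lam ^ (k+1) * C := by ring
  have hsum : ∀ n j, p (u n) (u (n + 1 + j)) ≤ (∑ k ∈ Finset.range (j+1), lam ^ (n + k)) * C := by
    intro n j; induction j with
    | zero => simpa using hstep n
    | succ k ih =>
      have h1 := hw1 (u n) (u (n + 1 + k)) (u (n + 1 + k + 1))
      have h2 := hstep (n + 1 + k)
      calc p (u n) (u (n + 1 + (k + 1))) = p (u n) (u (n + 1 + k + 1)) := by ring_nf
        _ ≤ p (u n) (u (n + 1 + k)) + p (u (n + 1 + k)) (u (n + 1 + k + 1)) := h1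
        _ ≤ (∑ i ∈ Finset.range (k+1), lam ^ (n + i)) * C + lam ^ (n + 1 + k) * C :=
            add_le_add ih h2
        _ = (∑ i ∈ Finset.range (k+2), lam ^ (n + i)) * C := by
            rw [show k + 2 = (k+1)+1 from rfl, Finset.sum_range_succ _ (k+1)]
            ring
  have hCnn : 0 ≤ C := hp0 _ _
  have hgeom : ∀ n j, p (u n) (u (n + 1 + j)) ≤ lam ^ n * (1 - lam)⁻¹ * C := by
    intro n j
    refine (hsum n j).trans (mul_le_mul_of_nonneg_right ?_ hCnn)
    have : (∑ k ∈ Finset.range (j+1), lam ^ (n + k))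
        = lam ^ n * ∑ k ∈ Finset.range (j+1), lam ^ k := by
      rw [Finset.mul_sum]; congr 1; ext k; rw [pow_add]
    rw [this]
    refine mul_le_mul_of_nonneg_left ?_ (pow_nonneg hlam0 n)
    have := Summable.sum_le_tsum (Finset.range (j+1)) (fun i _ => pow_nonneg hlam0 i)
      (summable_geometric_of_lt_one hlam0 hlam1)
    rwa [tsum_geometric_of_lt_one hlam0 hlam1] at this
  -- Cauchy
  have hbd : ∀ n m, n < m → p (u n) (u m) ≤ lam ^ n * (1 - lam)⁻¹ * C := by
    intro n m hnm
    obtain ⟨j, rfl⟩ : ∃ j, m = n + 1 + j := ⟨m - (n+1), by omega⟩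
    exact hgeom n j
  have htend : Filter.Tendsto (fun n => lam ^ n * (1 - lam)⁻¹ * C) Filter.atTop (nhds 0) := by
    have := tendsto_pow_atTop_nhds_zero_of_lt_one hlam0 hlam1
    simpa using (this.mul_const ((1 - lam)⁻¹)).mul_const C
  have hcauchy : CauchySeq u := by
    rw [Metric.cauchySeq_iff]
    intro ε hε
    obtain ⟨δ, hδ0, hδ⟩ := hw3 (ε/2) (by linarith)
    obtain ⟨N, hN⟩ := (Filter.eventually_atTop.1 (htend.eventually (gt_mem_nhds hδ0)))
    refine ⟨N + 1, fun m hm n hn => ?_⟩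
    have key : ∀ k, N < k → p (u N) (u k) ≤ δ := fun k hk =>
      (hbd N k hk).trans (le_of_lt (hN N le_rfl))
    have := hδ (u m) (u n) (u N) (key m (by omega)) (key n (by omega))
    linarith
  obtain ⟨z, hz⟩ := cauchySeq_tendsto_of_complete hcauchy
  refine ⟨z, ?_⟩
  have h1 : Filter.Tendsto (fun n => T (u n)) Filter.atTop (nhds (T z)) := hcont z u hR hz
  have h2 : Filter.Tendsto (fun n => T (u n)) Filter.atTop (nhds z) := by
    have heq : (fun n => T (u n)) = fun n => u (n + 1) := funext fun n => (hunext n).symm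
    rw [heq]
    exact hz.comp (Filter.tendsto_add_atTop_nat 1)
  exact tendsto_nhds_unique h1 h2
end

section
/- Let (X,d) be a complete metric space, R a binary relation on X, p a w-distance on X with respect to R, and T : X → X such that: (i) there exists x₀ with (x₀, T x₀) ∈ R; (ii) R is T-closed; (iii) R is d-self-closed; (iv) there is λ ∈ [0,1) with p(Tx, Ty) ≤ λ p(x,y) whenever (x,y) ∈ R. Then T has a fixed point. -/
/-!
The Picard iterates `uₙ = Tⁿ x₀` form an `R`-preserving sequence with `p(uₙ, uₙ₊₁) ≤ λⁿ p(x₀, Tx₀)`,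
so the triangle inequality gives `p(uₙ, uₘ) ≤ bₙ := λⁿ p(x₀, Tx₀) / (1 - λ)` for `n < m`. The third
w-distance axiom turns this into the Cauchy property, and lower semicontinuity passes the bound
to the limit: `p(uₙ, x) ≤ bₙ`. Along the subsequence with `(u_{φ k}, x) ∈ R` the contraction also
gives `p(u_{φ k}, Tx) ≤ 2 b_{φ k}`, so `x` and `Tx` are both `p`-close to a common point, and
the third axiom once more forces `Tx = x`.
-/

open Filter Topology Finset

section WDistance

variable {X : Type*} {p : X → X → ℝ}

theorem eq_of_forall_exists_wdist_le [MetricSpace X]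
    (hw3 : ∀ ε > (0:ℝ), ∃ δ > (0:ℝ), ∀ x y z : X, p z x ≤ δ → p z y ≤ δ → dist x y ≤ ε)
    {x y : X} (h : ∀ δ > (0:ℝ), ∃ z, p z x ≤ δ ∧ p z y ≤ δ) : x = y := by
  refine dist_le_zero.mp (le_of_forall_gt_imp_ge_of_dense fun ε hε => ?_)
  obtain ⟨δ, hδ, hδε⟩ := hw3 ε hε
  obtain ⟨z, hzx, hzy⟩ := h δ hδ
  exact hδε x y z hzx hzy

theorem cauchySeq_of_wdist_le [MetricSpace X]
    (hw3 : ∀ ε > (0:ℝ), ∃ δ > (0:ℝ), ∀ x y z : X, p z x ≤ δ → p z y ≤ δ → dist x y ≤ ε)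
    {u : ℕ → X} {b : ℕ → ℝ} (hb : Tendsto b atTop (𝓝 0))
    (hub : ∀ n m, n < m → p (u n) (u m) ≤ b n) : CauchySeq u := by
  refine Metric.cauchySeq_iff'.mpr fun ε hε => ?_
  obtain ⟨δ, hδ, hδε⟩ := hw3 (ε / 2) (half_pos hε)
  obtain ⟨N, hN⟩ := (hb.eventually (ge_mem_nhds hδ)).exists_forall_of_atTop
  refine ⟨N + 1, fun n hn => ?_⟩
  have hNn : p (u N) (u n) ≤ δ := (hub N n hn).trans (hN N le_rfl)
  have hNN : p (u N) (u (N + 1)) ≤ δ := (hub N (N + 1) N.lt_succ_self).trans (hN N le_rfl)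
  exact (hδε _ _ _ hNn hNN).trans_lt (half_lt_self hε)

/-- Needs `m < n`: a w-distance need not vanish on the diagonal. -/
theorem wdist_le_Ico_sum (hw1 : ∀ x y z, p x z ≤ p x y + p y z) (u : ℕ → X) {m n : ℕ}
    (hmn : m < n) : p (u m) (u n) ≤ ∑ i ∈ Ico m n, p (u i) (u (i + 1)) := by
  induction n, Nat.succ_le_of_lt hmn using Nat.le_induction with
  | base => simp
  | succ n hle ih =>
    calc p (u m) (u (n + 1)) ≤ p (u m) (u n) + p (u n) (u (n + 1)) := hw1 _ _ _
      _ ≤ (∑ i ∈ Ico m n, p (u i) (u (i + 1))) + p (u n) (u (n + 1)) := by gcongr; exact ih hle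
      _ = ∑ i ∈ Ico m (n + 1), p (u i) (u (i + 1)) := (sum_Ico_succ_top (by omega) _).symm

theorem wdist_le_of_wdist_succ_le_geometric (hw1 : ∀ x y z, p x z ≤ p x y + p y z)
    {u : ℕ → X} {c r : ℝ} (hc : 0 ≤ c) (hr0 : 0 ≤ r) (hr1 : r < 1)
    (hu : ∀ n, p (u n) (u (n + 1)) ≤ c * r ^ n) {n m : ℕ} (hnm : n < m) :
    p (u n) (u m) ≤ c * r ^ n / (1 - r) :=
  calc p (u n) (u m) ≤ ∑ i ∈ Ico n m, p (u i) (u (i + 1)) := wdist_le_Ico_sum hw1 u hnm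
    _ ≤ ∑ i ∈ Ico n m, c * r ^ i := sum_le_sum fun i _ => hu i
    _ = c * ∑ i ∈ Ico n m, r ^ i := (mul_sum _ _ _).symm
    _ ≤ c * (r ^ n / (1 - r)) := by gcongr; exact geom_sum_Ico_le_of_lt_one hr0 hr1
    _ = c * r ^ n / (1 - r) := by ring

theorem wdist_le_of_tendsto {z l : X} {u : ℕ → X} {c : ℝ} (hp0 : ∀ x y, 0 ≤ p x y)
    (hlsc : p z l ≤ liminf (fun n => p z (u n)) atTop) (hc : ∀ᶠ n in atTop, p z (u n) ≤ c) :
    p z l ≤ c :=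
  hlsc.trans <| liminf_le_of_frequently_le hc.frequently (isBoundedUnder_of ⟨0, fun _ => hp0 _ _⟩)

theorem rel_iterate_iterate_succ {R : X → X → Prop} {T : X → X} {x₀ : X} (hx₀ : R x₀ (T x₀))
    (hTc : ∀ x y, R x y → R (T x) (T y)) (n : ℕ) :
    R (T^[n] x₀) (T^[n + 1] x₀) := by
  induction n with
  | zero => exact hx₀
  | succ n ih => simpa only [Function.iterate_succ_apply'] using hTc _ _ ih

theorem wdist_iterate_succ_le {R : X → X → Prop} {T : X → X} {x₀ : X} {lam : ℝ} (hlam0 : 0 ≤ lam)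
    (hx₀ : R x₀ (T x₀)) (hTc : ∀ x y, R x y → R (T x) (T y))
    (hcontr : ∀ x y, R x y → p (T x) (T y) ≤ lam * p x y)
    (n : ℕ) : p (T^[n] x₀) (T^[n + 1] x₀) ≤ p x₀ (T x₀) * lam ^ n := by
  induction n with
  | zero => simp
  | succ n ih =>
    have h := hcontr _ _ (rel_iterate_iterate_succ hx₀ hTc n)
    simp only [← Function.iterate_succ_apply' T] at h
    calc p (T^[n + 1] x₀) (T^[n + 2] x₀) ≤ lam * p (T^[n] x₀) (T^[n + 1] x₀) := h
      _ ≤ lam * (p x₀ (T x₀) * lam ^ n) := by gcongr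
      _ = p x₀ (T x₀) * lam ^ (n + 1) := by ring

end WDistance

theorem relational_banach_wdist_dselfclosed {X : Type*} [MetricSpace X] [CompleteSpace X]
    (R : X → X → Prop)
    (p : X → X → ℝ) (hp0 : ∀ x y, 0 ≤ p x y)
    (hw1 : ∀ x y z, p x z ≤ p x y + p y z)
    (hw2 : ∀ (x : X) (u : ℕ → X) (l : X), (∀ n, R (u n) (u (n + 1))) →
      Filter.Tendsto u Filter.atTop (nhds l) →
      p x l ≤ Filter.liminf (fun n => p x (u n)) Filter.atTop)
    (hw3 : ∀ ε > (0:ℝ), ∃ δ > (0:ℝ), ∀ x y z : X, p z x ≤ δ → p z y ≤ δ → dist x y ≤ ε)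
    (T : X → X) (x₀ : X) (hx₀ : R x₀ (T x₀))
    (hTc : ∀ x y, R x y → R (T x) (T y))
    (hdsc : ∀ (u : ℕ → X) (x : X), (∀ n, R (u n) (u (n + 1))) →
      Filter.Tendsto u Filter.atTop (nhds x) →
      ∃ φ : ℕ → ℕ, StrictMono φ ∧ ∀ k, R (u (φ k)) x)
    (lam : ℝ) (hlam0 : 0 ≤ lam) (hlam1 : lam < 1)
    (hcontr : ∀ x y, R x y → p (T x) (T y) ≤ lam * p x y) :
    ∃ x : X, T x = x := by
  set u : ℕ → X := fun n => T^[n] x₀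
  set b : ℕ → ℝ := fun n => p x₀ (T x₀) * lam ^ n / (1 - lam)
  have hR : ∀ n, R (u n) (u (n + 1)) := rel_iterate_iterate_succ hx₀ hTc
  have hub : ∀ n m, n < m → p (u n) (u m) ≤ b n := fun _ _ =>
    wdist_le_of_wdist_succ_le_geometric hw1 (hp0 _ _) hlam0 hlam1
      (wdist_iterate_succ_le hlam0 hx₀ hTc hcontr)
  have hb : Tendsto b atTop (𝓝 0) := by
    simpa using ((tendsto_pow_atTop_nhds_zero_of_lt_one hlam0 hlam1).const_mul
      (p x₀ (T x₀))).div_const (1 - lam)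
  obtain ⟨x, hx⟩ := cauchySeq_tendsto_of_complete (cauchySeq_of_wdist_le hw3 hb hub)
  have hux : ∀ n, p (u n) x ≤ b n := fun n =>
    wdist_le_of_tendsto hp0 (hw2 _ u x hR hx) (eventually_gt_atTop n |>.mono (hub n))
  obtain ⟨φ, hφ, hφR⟩ := hdsc u x hR hx
  have huTx : ∀ k, p (u (φ k)) (T x) ≤ 2 * b (φ k) := fun k =>
    calc p (u (φ k)) (T x) ≤ p (u (φ k)) (u (φ k + 1)) + p (T (u (φ k))) (T x) := by
          rw [← Function.iterate_succ_apply' T]; exact hw1 _ _ _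
      _ ≤ b (φ k) + lam * b (φ k) := by
          gcongr
          · exact hub _ _ (lt_add_one _)
          · exact (hcontr _ _ (hφR k)).trans (by gcongr; exact hux _)
      _ ≤ 2 * b (φ k) := by nlinarith [(hp0 _ _).trans (hux (φ k))]
  refine ⟨x, eq_of_forall_exists_wdist_le hw3 fun δ hδ => ?_⟩
  obtain ⟨k, hk⟩ : ∃ k, 2 * b (φ k) ≤ δ := ((hb.comp hφ.tendsto_atTop).const_mul 2 |>.eventually
    (ge_mem_nhds (by simpa using hδ))).exists
  have hbk : 0 ≤ b (φ k) := (hp0 _ _).trans (hux _)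
  exact ⟨u (φ k), (huTx k).trans hk, (hux _).trans (by linarith)⟩
end

section
/- Let (X,d) be a metric space, R a binary relation on X, p a w-distance on X with respect to R, and T : X → X with (x,y) ∈ R implying p(Tx, Ty) ≤ λ p(x,y) for some λ ∈ [0,1), and R T-closed. If x̃ and ỹ are fixed points of T and there exists z ∈ X with (z, x̃) ∈ R and (z, ỹ) ∈ R, then x̃ = ỹ. -/
theorem wdist_fixed_point_unique_via_z {X : Type*} [MetricSpace X] (R : X → X → Prop)
    (p : X → X → ℝ) (hp0 : ∀ x y, 0 ≤ p x y)
    (hw1 : ∀ x y z, p x z ≤ p x y + p y z)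
    (hw2 : ∀ (x : X) (u : ℕ → X) (l : X), (∀ n, R (u n) (u (n + 1))) →
      Filter.Tendsto u Filter.atTop (nhds l) →
      p x l ≤ Filter.liminf (fun n => p x (u n)) Filter.atTop)
    (hw3 : ∀ ε > (0:ℝ), ∃ δ > (0:ℝ), ∀ x y z : X, p z x ≤ δ → p z y ≤ δ → dist x y ≤ ε)
    (T : X → X) (hTc : ∀ x y, R x y → R (T x) (T y))
    (lam : ℝ) (hlam0 : 0 ≤ lam) (hlam1 : lam < 1)
    (hcontr : ∀ x y, R x y → p (T x) (T y) ≤ lam * p x y)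
    (x' y' : X) (hx' : T x' = x') (hy' : T y' = y')
    (z : X) (hzx : R z x') (hzy : R z y') :
    x' = y' := by
  have key : ∀ n, p (T^[n] z) x' ≤ lam ^ n * p z x' ∧ p (T^[n] z) y' ≤ lam ^ n * p z y'
      ∧ R (T^[n] z) x' ∧ R (T^[n] z) y' := by
    intro n
    induction n with
    | zero => exact ⟨by simp, by simp, hzx, hzy⟩
    | succ n ih =>
      obtain ⟨h1, h2, h3, h4⟩ := ih
      rw [Function.iterate_succ_apply']
      refine ⟨?_, ?_, ?_, ?_⟩
      · calc p (T (T^[n] z)) x' = p (T (T^[n] z)) (T x') := by rw [hx']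
          _ ≤ lam * p (T^[n] z) x' := hcontr _ _ h3
          _ ≤ lam * (lam ^ n * p z x') := by
              exact mul_le_mul_of_nonneg_left h1 hlam0
          _ = lam ^ (n + 1) * p z x' := by ring
      · calc p (T (T^[n] z)) y' = p (T (T^[n] z)) (T y') := by rw [hy']
          _ ≤ lam * p (T^[n] z) y' := hcontr _ _ h4
          _ ≤ lam * (lam ^ n * p z y') := by
              exact mul_le_mul_of_nonneg_left h2 hlam0
          _ = lam ^ (n + 1) * p z y' := by ring
      · have := hTc _ _ h3; rwa [hx'] at this
      · have := hTc _ _ h4; rwa [hy'] at this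
  have hdist : ∀ ε > (0:ℝ), dist x' y' ≤ ε := by
    intro ε hε
    obtain ⟨δ, hδ, hδ'⟩ := hw3 ε hε
    have hpow : Filter.Tendsto (fun n => lam ^ n) Filter.atTop (nhds 0) :=
      tendsto_pow_atTop_nhds_zero_of_lt_one hlam0 hlam1
    have h1 : Filter.Tendsto (fun n => lam ^ n * p z x') Filter.atTop (nhds 0) := by
      simpa using hpow.mul_const (p z x')
    have h2 : Filter.Tendsto (fun n => lam ^ n * p z y') Filter.atTop (nhds 0) := by
      simpa using hpow.mul_const (p z y')
    have e1 : ∀ᶠ n in Filter.atTop, lam ^ n * p z x' ≤ δ :=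
      h1.eventually_le_const hδ
    have e2 : ∀ᶠ n in Filter.atTop, lam ^ n * p z y' ≤ δ :=
      h2.eventually_le_const hδ
    obtain ⟨n, hn1, hn2⟩ := (e1.and e2).exists
    obtain ⟨k1, k2, -, -⟩ := key n
    exact hδ' x' y' (T^[n] z) (k1.trans hn1) (k2.trans hn2)
  have : dist x' y' ≤ 0 := le_of_forall_pos_le_add fun ε hε => by
    linarith [hdist ((dist x' y' + ε) / 2) (by positivity)]
  exact dist_le_zero.mp this
end

section
/- Let X = [0,2] with the standard metric and relation (x,y) ∈ R iff x·y ≤ x or x·y ≤ y. Define T : X → X by T(x) = x/3 for 0 ≤ x ≤ 2/3, T(x) = 1 - x for 2/3 < x < 1, T(1) = 3/4, and T(x) = x - 1/2 for x > 1, and let p(x,y) = y. Then there exists λ ∈ [0,1) (e.g., λ = 3/4) such that p(Tx, Ty) ≤ λ·p(x,y) for all (x,y) ∈ R, R is T-closed, and x = 0 is the unique fixed point of T. -/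
theorem example_wdist_contraction_unique_fixed_point :
    let T : ℝ → ℝ := fun x =>
      if x ≤ 2/3 then x / 3 else if x < 1 then 1 - x else if x = 1 then 3/4 else x - 1/2
    let R : ℝ → ℝ → Prop := fun x y => x * y ≤ x ∨ x * y ≤ y
    let p : ℝ → ℝ → ℝ := fun _ y => y
    (∃ lam : ℝ, 0 ≤ lam ∧ lam < 1 ∧ ∀ x ∈ Set.Icc (0:ℝ) 2, ∀ y ∈ Set.Icc (0:ℝ) 2,
        R x y → p (T x) (T y) ≤ lam * p x y) ∧
    (∀ x ∈ Set.Icc (0:ℝ) 2, ∀ y ∈ Set.Icc (0:ℝ) 2, R x y → R (T x) (T y)) ∧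
    T 0 = 0 ∧ (∀ x ∈ Set.Icc (0:ℝ) 2, T x = x → x = 0) := by
  intro T R p
  have Tnn : ∀ z ∈ Set.Icc (0:ℝ) 2, 0 ≤ T z := by
    intro z hz
    obtain ⟨h0, h2⟩ := hz
    simp only [T]
    split_ifs with h1 h3 h4 <;> [positivity; linarith; norm_num; linarith]
  have Tle1 : ∀ z ∈ Set.Icc (0:ℝ) 2, z ≤ 3/2 → T z ≤ 1 := by
    intro z hz hz32
    obtain ⟨h0, h2⟩ := hz
    simp only [T]
    split_ifs with h1 h3 h4 <;> linarith
  refine ⟨⟨3/4, by norm_num, by norm_num, ?_⟩, ?_, ?_, ?_⟩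
  · intro x hx y hy _
    obtain ⟨h0, h2⟩ := hy
    show T y ≤ 3/4 * y
    simp only [T]
    split_ifs with h1 h3 h4 <;> linarith
  · intro x hx y hy hR
    have key : x ≤ 3/2 ∨ y ≤ 3/2 := by
      by_contra h
      push_neg at h
      obtain ⟨hx32, hy32⟩ := h
      rcases hR with h | h <;> nlinarith
    rcases key with h | h
    · right
      have := Tle1 x hx h
      nlinarith [Tnn y hy]
    · left
      have := Tle1 y hy h
      nlinarith [Tnn x hx]
  · norm_num [T]
  · intro x hx hfix
    obtain ⟨h0, h2⟩ := hx
    simp only [T] at hfix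
    split_ifs at hfix with h1 h3 h4 <;> [linarith; linarith; linarith; linarith]
end

section
/- Let (X,d) be a metric space with binary relation R, p a w-distance with respect to R, λ ∈ [0,1), and T : X → X with R T-closed and p(Tx,Ty) ≤ λ p(x,y) for all (x,y) ∈ R. If x₀ ∈ X satisfies (x₀, T x₀) ∈ R and xₙ = Tⁿ x₀, then for all m > n, p(xₙ, xₘ) ≤ (λⁿ/(1-λ))·p(x₀, x₁); consequently (xₙ) is an R-preserving Cauchy sequence in (X,d). -/
theorem picard_iterates_wdist_cauchy {X : Type*} [MetricSpace X] (R : X → X → Prop)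
    (p : X → X → ℝ) (hp0 : ∀ x y, 0 ≤ p x y)
    (hw1 : ∀ x y z, p x z ≤ p x y + p y z)
    (hw2 : ∀ (x : X) (u : ℕ → X) (l : X), (∀ n, R (u n) (u (n + 1))) →
      Filter.Tendsto u Filter.atTop (nhds l) →
      p x l ≤ Filter.liminf (fun n => p x (u n)) Filter.atTop)
    (hw3 : ∀ ε > (0:ℝ), ∃ δ > (0:ℝ), ∀ x y z : X, p z x ≤ δ → p z y ≤ δ → dist x y ≤ ε)
    (T : X → X) (hTc : ∀ x y, R x y → R (T x) (T y))
    (lam : ℝ) (hlam0 : 0 ≤ lam) (hlam1 : lam < 1)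
    (hcontr : ∀ x y, R x y → p (T x) (T y) ≤ lam * p x y)
    (x₀ : X) (hx₀ : R x₀ (T x₀)) (x : ℕ → X) (hxdef : ∀ n, x n = T^[n] x₀) :
    (∀ m n : ℕ, n < m → p (x n) (x m) ≤ (lam ^ n / (1 - lam)) * p (x 0) (x 1)) ∧
    (∀ n, R (x n) (x (n + 1))) ∧ CauchySeq x := by
  have hsucc : ∀ n, x (n + 1) = T (x n) := by
    intro n
    rw [hxdef, hxdef, Function.iterate_succ_apply']
  have hR : ∀ n, R (x n) (x (n + 1)) := by
    intro n
    induction n with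
    | zero => simpa [hxdef, hsucc] using hx₀
    | succ k ih =>
      have h := hTc _ _ ih
      rwa [← hsucc k, ← hsucc (k+1)] at h
  have h1 : 0 < 1 - lam := by linarith
  have hstep : ∀ n, p (x n) (x (n + 1)) ≤ lam ^ n * p (x 0) (x 1) := by
    intro n
    induction n with
    | zero => simp
    | succ k ih =>
      have h := hcontr _ _ (hR k)
      rw [← hsucc k, ← hsucc (k+1)] at h
      calc p (x (k+1)) (x (k+1+1)) ≤ lam * p (x k) (x (k+1)) := h
        _ ≤ lam * (lam ^ k * p (x 0) (x 1)) := mul_le_mul_of_nonneg_left ih hlam0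
        _ = lam ^ (k+1) * p (x 0) (x 1) := by ring
  have hsum : ∀ n k : ℕ, p (x n) (x (n + 1 + k)) ≤
      ∑ j ∈ Finset.Ico n (n + 1 + k), lam ^ j * p (x 0) (x 1) := by
    intro n k
    induction k with
    | zero => simpa using hstep n
    | succ k ih =>
      calc p (x n) (x (n + 1 + (k+1)))
          ≤ p (x n) (x (n + 1 + k)) + p (x (n + 1 + k)) (x (n + 1 + k + 1)) := by
            have := hw1 (x n) (x (n + 1 + k)) (x (n + 1 + (k+1)))
            simpa [show n + 1 + (k+1) = n + 1 + k + 1 by ring] using this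
        _ ≤ (∑ j ∈ Finset.Ico n (n + 1 + k), lam ^ j * p (x 0) (x 1))
              + lam ^ (n + 1 + k) * p (x 0) (x 1) := add_le_add ih (hstep _)
        _ = ∑ j ∈ Finset.Ico n (n + 1 + (k+1)), lam ^ j * p (x 0) (x 1) := by
            rw [show n + 1 + (k+1) = (n + 1 + k) + 1 by ring,
              Finset.sum_Ico_succ_top (by omega)]
  have key : ∀ m n : ℕ, n < m → p (x n) (x m) ≤ (lam ^ n / (1 - lam)) * p (x 0) (x 1) := by
    intro m n hnm
    obtain ⟨k, rfl⟩ : ∃ k, m = n + 1 + k := ⟨m - n - 1, by omega⟩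
    calc p (x n) (x (n + 1 + k)) ≤ ∑ j ∈ Finset.Ico n (n + 1 + k), lam ^ j * p (x 0) (x 1) :=
          hsum n k
      _ = (∑ j ∈ Finset.Ico n (n + 1 + k), lam ^ j) * p (x 0) (x 1) := by
          rw [Finset.sum_mul]
      _ ≤ (lam ^ n / (1 - lam)) * p (x 0) (x 1) := by
          apply mul_le_mul_of_nonneg_right _ (hp0 _ _)
          have := geom_sum_Ico' hlam1.ne (by omega : n ≤ n + 1 + k)
          rw [this]
          have h2 : 0 ≤ lam ^ (n + 1 + k) := pow_nonneg hlam0 _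
          rw [div_le_div_iff₀ h1 h1]
          nlinarith [pow_nonneg hlam0 n]
  refine ⟨key, hR, ?_⟩
  rw [Metric.cauchySeq_iff]
  intro ε hε
  obtain ⟨δ, hδ0, hδ⟩ := hw3 (ε/2) (by linarith)
  have hl : Filter.Tendsto (fun n => (lam ^ n / (1 - lam)) * p (x 0) (x 1)) Filter.atTop (nhds 0) := by
    have := tendsto_pow_atTop_nhds_zero_of_lt_one hlam0 hlam1
    have : Filter.Tendsto (fun n => (lam ^ n / (1 - lam)) * p (x 0) (x 1)) Filter.atTop
        (nhds ((0 / (1 - lam)) * p (x 0) (x 1))) :=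
      ((this.div_const _).mul_const _)
    simpa using this
  obtain ⟨N, hN⟩ := (Metric.tendsto_atTop.mp hl) δ hδ0
  refine ⟨N + 1, fun m hm n hn => ?_⟩
  have hb : ∀ j, N < j → p (x N) (x j) ≤ δ := by
    intro j hj
    have := key j N hj
    have h2 := hN N le_rfl
    rw [Real.dist_eq, sub_zero] at h2
    have h3 : (lam ^ N / (1 - lam)) * p (x 0) (x 1) ≤ δ := by
      calc _ ≤ |(lam ^ N / (1 - lam)) * p (x 0) (x 1)| := le_abs_self _
        _ ≤ δ := h2.le
    linarith
  have h2 : dist (x m) (x n) ≤ ε / 2 :=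
    hδ _ _ _ (hb m (by omega)) (hb n (by omega))
  linarith
end
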